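/- arXiv:1307.3455 — 5 statements merged into one kernel-verified Lean document; each statement's English description precedes it below -/
import Mathlib

section
/- Let q, p ∈ (1, ∞) with conjugate exponents q' = q/(q−1) and p' = p/(p−1). In the abstract Girsanov setting, for every X ∈ L^{qp}(P) and every Y ∈ L^{q'}(P), the quantity E[X·ρ·(Y∘τ)] is well defined (the integrand is integrable) and satisfies |E[X·ρ·(Y∘τ)]| ≤ ‖X‖_{L^{qp}(P)} · ‖ρ‖_{L^{p'}(P)}^{1/q} · ‖Y‖_{L^{q'}(P)}. -/
/-!
Under `Q := ρ · P` the Girsanov hypothesis says exactly that `τ` pushes `Q` forward to `P`,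
so `Y ∘ τ` has the same `L^{q'}(Q)` norm as `Y` in `L^{q'}(P)`. The integral
`E_P[X ρ (Y ∘ τ)]` is `E_Q[X (Y ∘ τ)]`, which Hölder's inequality in `L^q(Q) × L^{q'}(Q)` bounds,
and a second Hölder inequality, in `L^p(P) × L^{p'}(P)`, gives
`‖X‖_{L^q(Q)}^q = E_P[|X|^q ρ] ≤ ‖X‖_{L^{qp}(P)}^q ‖ρ‖_{L^{p'}(P)}`.
-/

open MeasureTheory
open scoped ENNReal

namespace MeasureTheory

variable {α β E : Type*} [MeasurableSpace α] [MeasurableSpace β] {μ : Measure α} {ρ : α → ℝ}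
  [NormedAddCommGroup E]

lemma integrable_withDensity_ofReal_iff [NormedSpace ℝ E] (hρ : Measurable ρ) (hρ0 : 0 ≤ᵐ[μ] ρ)
    {g : α → E} :
    Integrable g (μ.withDensity fun x => ENNReal.ofReal (ρ x)) ↔
      Integrable (fun x => ρ x • g x) μ := by
  rw [integrable_withDensity_iff_integrable_smul' hρ.ennreal_ofReal
    (ae_of_all _ fun _ => ENNReal.ofReal_lt_top)]
  refine integrable_congr ?_
  filter_upwards [hρ0] with x hx
  rw [ENNReal.toReal_ofReal hx]

lemma integral_withDensity_ofReal [NormedSpace ℝ E] (hρ : Measurable ρ) (hρ0 : 0 ≤ᵐ[μ] ρ)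
    (g : α → E) :
    ∫ x, g x ∂μ.withDensity (fun x => ENNReal.ofReal (ρ x)) = ∫ x, ρ x • g x ∂μ := by
  rw [integral_withDensity_eq_integral_toReal_smul hρ.ennreal_ofReal
    (ae_of_all _ fun _ => ENNReal.ofReal_lt_top)]
  refine integral_congr_ae ?_
  filter_upwards [hρ0] with x hx
  rw [ENNReal.toReal_ofReal hx]

lemma eLpNorm_one_withDensity_ofReal [NormedSpace ℝ E] (hρ : Measurable ρ) (hρ0 : 0 ≤ᵐ[μ] ρ)
    (g : α → E) :
    eLpNorm g 1 (μ.withDensity fun x => ENNReal.ofReal (ρ x)) = eLpNorm (ρ • g) 1 μ := by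
  rw [eLpNorm_one_eq_lintegral_enorm, eLpNorm_one_eq_lintegral_enorm,
    lintegral_withDensity_eq_lintegral_mul_non_measurable _ hρ.ennreal_ofReal
      (ae_of_all _ fun _ => ENNReal.ofReal_lt_top)]
  refine lintegral_congr_ae ?_
  filter_upwards [hρ0] with x hx
  rw [Pi.mul_apply, Pi.smul_apply', enorm_smul, Real.enorm_eq_ofReal hx]

lemma eLpNorm_withDensity_ofReal_le {f : α → E} (hf : AEStronglyMeasurable f μ)
    (hρ : Measurable ρ) (hρ0 : 0 ≤ᵐ[μ] ρ) {q p p' : ℝ} (hq : 0 < q)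
    (hpp' : p.HolderConjugate p') :
    eLpNorm f (ENNReal.ofReal q) (μ.withDensity fun x => ENNReal.ofReal (ρ x)) ≤
      eLpNorm f (ENNReal.ofReal (q * p)) μ * eLpNorm ρ (ENNReal.ofReal p') μ ^ (1 / q) := by
  have := hpp'.symm.ennrealOfReal
  rw [← ENNReal.rpow_le_rpow_iff hq, ENNReal.mul_rpow_of_nonneg _ _ hq.le, ← ENNReal.rpow_mul,
    one_div_mul_cancel hq.ne', ENNReal.rpow_one]
  calc eLpNorm f (ENNReal.ofReal q) (μ.withDensity fun x => ENNReal.ofReal (ρ x)) ^ q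
      = eLpNorm (ρ • fun x => ‖f x‖ ^ q) 1 μ := by
        rw [← eLpNorm_one_withDensity_ofReal hρ hρ0, eLpNorm_norm_rpow _ hq, one_mul]
    _ ≤ eLpNorm ρ (ENNReal.ofReal p') μ * eLpNorm (fun x => ‖f x‖ ^ q) (ENNReal.ofReal p) μ :=
        eLpNorm_smul_le_mul_eLpNorm (hf.norm.aemeasurable.pow_const q).aestronglyMeasurable
          hρ.aestronglyMeasurable
    _ = eLpNorm f (ENNReal.ofReal (q * p)) μ ^ q * eLpNorm ρ (ENNReal.ofReal p') μ := by
        rw [eLpNorm_norm_rpow _ hq, ← ENNReal.ofReal_mul hpp'.nonneg, mul_comm p, mul_comm]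

lemma measurePreserving_withDensity_ofReal {ν : Measure β} [IsFiniteMeasure ν] {τ : α → β}
    (hτ : Measurable τ) (hρ : Integrable ρ μ) (hρ0 : 0 ≤ᵐ[μ] ρ)
    (h : ∀ Y : β → ℝ, Integrable Y ν → ∫ x, Y (τ x) * ρ x ∂μ = ∫ y, Y y ∂ν) :
    MeasurePreserving τ (μ.withDensity fun x => ENNReal.ofReal (ρ x)) ν := by
  refine ⟨hτ, Measure.ext fun s hs => ?_⟩
  have hset : ∫ x in τ ⁻¹' s, ρ x ∂μ = ν.real s := by
    rw [← integral_indicator (hτ hs), ← integral_indicator_one hs,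
      ← h (s.indicator 1) ((integrable_const 1).indicator hs)]
    congr 1 with x
    by_cases hx : τ x ∈ s <;> simp [hx]
  rw [Measure.map_apply hτ hs, withDensity_apply _ (hτ hs),
    ← ofReal_integral_eq_lintegral_ofReal hρ.restrict (ae_restrict_of_ae hρ0), hset,
    ofReal_measureReal]

lemma enorm_integral_mul_le {p q : ℝ≥0∞} [ENNReal.HolderConjugate p q] {f g : α → ℝ}
    (hf : AEStronglyMeasurable f μ) (hg : AEStronglyMeasurable g μ) :
    ‖∫ x, f x * g x ∂μ‖ₑ ≤ eLpNorm f p μ * eLpNorm g q μ :=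
  calc ‖∫ x, f x * g x ∂μ‖ₑ ≤ eLpNorm (f • g) 1 μ := by
        rw [eLpNorm_one_eq_lintegral_enorm]; exact enorm_integral_le_lintegral_enorm _
    _ ≤ eLpNorm f p μ * eLpNorm g q μ := eLpNorm_smul_le_mul_eLpNorm hg hf

end MeasureTheory

/-- In the abstract Girsanov setting, for `q, p ∈ (1, ∞)`,
`X ∈ L^{qp}(P)` and `Y ∈ L^{q'}(P)`, the integrand `X·ρ·(Y∘τ)` is `P`-integrable and
`|E[X·ρ·(Y∘τ)]| ≤ ‖X‖_{qp} · ‖ρ‖_{p'}^{1/q} · ‖Y‖_{q'}`. -/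
theorem girsanov_duality_integrable_and_bound
    {Ω : Type*} [MeasurableSpace Ω] (P : Measure Ω) [IsProbabilityMeasure P]
    (τ : Ω → Ω) (hτ : Measurable τ)
    (ρ : Ω → ℝ) (hρm : Measurable ρ) (hρ0 : 0 ≤ᵐ[P] ρ)
    (hρLp : ∀ r : ℝ, 1 ≤ r → MemLp ρ (ENNReal.ofReal r) P)
    (hGirsanov : ∀ Y : Ω → ℝ, Integrable Y P →
      ∫ ω, Y (τ ω) * ρ ω ∂P = ∫ ω, Y ω ∂P)
    (q p : ℝ) (hq : 1 < q) (hp : 1 < p)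
    (X Y : Ω → ℝ)
    (hX : MemLp X (ENNReal.ofReal (q * p)) P)
    (hY : MemLp Y (ENNReal.ofReal (q / (q - 1))) P) :
    Integrable (fun ω => X ω * ρ ω * Y (τ ω)) P ∧
    |∫ ω, X ω * ρ ω * Y (τ ω) ∂P| ≤
      (eLpNorm X (ENNReal.ofReal (q * p)) P).toReal *
        ((eLpNorm ρ (ENNReal.ofReal (p / (p - 1))) P).toReal) ^ (1 / q) *
        (eLpNorm Y (ENNReal.ofReal (q / (q - 1))) P).toReal := by
  have hpp' : p.HolderConjugate (p / (p - 1)) := .conjExponent hp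
  have : ENNReal.HolderConjugate (ENNReal.ofReal q) (ENNReal.ofReal (q / (q - 1))) :=
    (Real.HolderConjugate.conjExponent hq).ennrealOfReal
  set Q := P.withDensity fun ω => ENNReal.ofReal (ρ ω)
  have hρint : Integrable ρ P := memLp_one_iff_integrable.1 (by simpa using hρLp 1 le_rfl)
  have hτQ : MeasurePreserving τ Q P :=
    measurePreserving_withDensity_ofReal hτ hρint hρ0 hGirsanov
  have hXQ := eLpNorm_withDensity_ofReal_le (q := q) hX.1 hρm hρ0 (by linarith) hpp'
  have hρp' := (hρLp _ hpp'.symm.lt.le).eLpNorm_ne_top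
  have hXQ' : MemLp X (ENNReal.ofReal q) Q :=
    ⟨hX.1.mono_ac (withDensity_absolutelyContinuous _ _),
      hXQ.trans_lt (by finiteness [hX.eLpNorm_ne_top, hρp'])⟩
  have hYQ : MemLp (Y ∘ τ) (ENNReal.ofReal (q / (q - 1))) Q := hY.comp_measurePreserving hτQ
  have hreassoc : (fun ω => X ω * ρ ω * Y (τ ω)) = fun ω => ρ ω • (X ω * Y (τ ω)) := by
    ext ω; rw [smul_eq_mul]; ring
  refine ⟨hreassoc ▸ (integrable_withDensity_ofReal_iff hρm hρ0).1 (hXQ'.integrable_mul hYQ), ?_⟩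
  rw [hreassoc, ← integral_withDensity_ofReal hρm hρ0, ← Real.norm_eq_abs, ← toReal_enorm,
    ENNReal.toReal_rpow, ← ENNReal.toReal_mul, ← ENNReal.toReal_mul,
    ← eLpNorm_comp_measurePreserving hY.1 hτQ]
  refine ENNReal.toReal_mono (by finiteness [hX.eLpNorm_ne_top, hρp', hY.eLpNorm_ne_top]) ?_
  exact (enorm_integral_mul_le hXQ'.1 hYQ.1).trans (mul_le_mul_left hXQ _)
end

section
/- Let q, p ∈ (1, ∞) with conjugate exponents q', p'. In the abstract Girsanov setting, the map X ↦ Z(X) is linear on L^{qp}(P): Z(aX + X') = a·Z(X) + Z(X') in L^q(P) for all a ∈ ℝ and X, X' ∈ L^{qp}(P); moreover it is continuous, with ‖Z(X)‖_{L^q(P)} ≤ ‖ρ‖_{L^{p'}(P)}^{1/q} · ‖X‖_{L^{qp}(P)} for every X ∈ L^{qp}(P). -/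
/-!
The hypothesis on `ρ` says that `τ` pushes the measure `ρ • P` forward to `P`, so that
`‖Y ∘ τ‖_{L^{q'}(ρ • P)} = ‖Y‖_{L^{q'}(P)}`. Hölder's inequality in `L^q(ρ • P)`, followed by
Hölder's inequality with exponents `p, p'` in `P`, then gives
`∫ |X| ρ |Y ∘ τ| dP ≤ ‖ρ‖_{p'}^{1/q} ‖X‖_{qp} ‖Y‖_{q'}`.
Hence all terms of the duality identities are integrable, the identities for `X`, `X'` and
`a X + X'` combine linearly, and testing against indicators identifies `Z(a X + X')`.
Testing the identity for `X` against `Y = sign Z(X) |Z(X)|^{q-1}`, for which `∫ Z(X) Y` is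
`‖Z(X)‖_q^q` and `‖Y‖_{q'}` is `‖Z(X)‖_q^{q-1}`, turns the same bound into the norm estimate.
-/

open MeasureTheory
open scoped ENNReal

section

variable {α : Type*} [MeasurableSpace α] {μ : Measure α}

theorem eLpNorm_withDensity_enorm_le {X ρ : α → ℝ} {q p p' : ℝ} (hq : 0 < q)
    (hpp' : p.HolderConjugate p') (hX : AEStronglyMeasurable X μ) (hρ : AEStronglyMeasurable ρ μ) :
    eLpNorm X (ENNReal.ofReal q) (μ.withDensity fun x => ‖ρ x‖ₑ) ≤
      eLpNorm ρ (ENNReal.ofReal p') μ ^ (1 / q) * eLpNorm X (ENNReal.ofReal (q * p)) μ := by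
  have := hpp'.symm.ennrealOfReal
  set R := eLpNorm ρ (ENNReal.ofReal p') μ
  set M := eLpNorm X (ENNReal.ofReal (q * p)) μ
  have hXq : AEStronglyMeasurable (fun x => ‖X x‖ ^ q) μ :=
    (hX.norm.aemeasurable.pow_const q).aestronglyMeasurable
  have hpow : eLpNorm X (ENNReal.ofReal q) (μ.withDensity fun x => ‖ρ x‖ₑ) ^ q ≤ R * M ^ q :=
    calc eLpNorm X (ENNReal.ofReal q) (μ.withDensity fun x => ‖ρ x‖ₑ) ^ q
        = ∫⁻ x, ‖‖X x‖ ^ q‖ₑ ∂μ.withDensity fun x => ‖ρ x‖ₑ := by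
          rw [← eLpNorm_one_eq_lintegral_enorm, eLpNorm_norm_rpow _ hq, one_mul]
      _ = eLpNorm (ρ • fun x => ‖X x‖ ^ q) 1 μ := by
          rw [lintegral_withDensity_eq_lintegral_mul₀ hρ.enorm hXq.enorm,
            eLpNorm_one_eq_lintegral_enorm]
          simp only [Pi.mul_apply, smul_eq_mul, enorm_mul]
      _ ≤ R * eLpNorm (fun x => ‖X x‖ ^ q) (ENNReal.ofReal p) μ :=
          eLpNorm_smul_le_mul_eLpNorm hXq hρ
      _ = R * M ^ q := by
          rw [eLpNorm_norm_rpow _ hq, ← ENNReal.ofReal_mul (one_pos.trans hpp'.lt).le, mul_comm p]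
  calc eLpNorm X (ENNReal.ofReal q) (μ.withDensity fun x => ‖ρ x‖ₑ)
      = (eLpNorm X (ENNReal.ofReal q) (μ.withDensity fun x => ‖ρ x‖ₑ) ^ q) ^ (1 / q) := by
        rw [← ENNReal.rpow_mul, mul_one_div_cancel hq.ne', ENNReal.rpow_one]
    _ ≤ (R * M ^ q) ^ (1 / q) := by gcongr
    _ = R ^ (1 / q) * M := by
        rw [ENNReal.mul_rpow_of_nonneg _ _ (by positivity), ← ENNReal.rpow_mul,
          mul_one_div_cancel hq.ne', ENNReal.rpow_one]

theorem ae_eq_of_forall_integral_mul_eq [SigmaFinite μ] {f g : α → ℝ} (hf : Integrable f μ)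
    (hg : Integrable g μ) {r : ℝ≥0∞}
    (h : ∀ Y : α → ℝ, StronglyMeasurable Y → MemLp Y r μ →
      ∫ x, f x * Y x ∂μ = ∫ x, g x * Y x ∂μ) :
    f =ᵐ[μ] g := by
  refine ae_eq_of_forall_setIntegral_eq_of_sigmaFinite (fun s _ _ => hf.integrableOn)
    (fun s _ _ => hg.integrableOn) fun s hs hμs => ?_
  have hind := h (s.indicator 1) (stronglyMeasurable_const.indicator hs)
    (memLp_indicator_const r hs 1 (Or.inr hμs.ne))
  simpa only [← integral_indicator hs, ← Set.indicator_mul_right, Pi.one_apply, mul_one]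
    using hind

theorem eLpNorm_le_of_forall_integral_mul_le {q q' : ℝ} (hqq' : q.HolderConjugate q')
    {f : α → ℝ} (hf : MemLp f (ENNReal.ofReal q) μ) {C : ℝ≥0∞}
    (h : ∀ Y : α → ℝ, StronglyMeasurable Y → MemLp Y (ENNReal.ofReal q') μ →
      ENNReal.ofReal (∫ x, f x * Y x ∂μ) ≤ C * eLpNorm Y (ENNReal.ofReal q') μ) :
    eLpNorm f (ENNReal.ofReal q) μ ≤ C := by
  set N := eLpNorm f (ENNReal.ofReal q) μ
  obtain ⟨f₀, hf₀, hff₀⟩ := hf.1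
  have hq1 : 0 < q - 1 := sub_pos.2 hqq'.lt
  -- `Y = sign f₀ * |f₀| ^ (q - 1)`, the case of equality in Hölder's inequality
  set Y : α → ℝ := fun x => f₀ x * |f₀ x| ^ (q - 2)
  have hYm : StronglyMeasurable Y := by
    have hf₀m := hf₀.measurable
    exact (hf₀m.mul (hf₀m.abs.pow_const _)).stronglyMeasurable
  have hY_norm : ∀ x, ‖Y x‖ = ‖f₀ x‖ ^ (q - 1) := fun x =>
    calc ‖Y x‖ = |f₀ x| * |f₀ x| ^ (q - 2) := by
          rw [Real.norm_eq_abs, abs_mul, abs_of_nonneg (Real.rpow_nonneg (abs_nonneg _) _)]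
      _ = ‖f₀ x‖ ^ (q - 1) := by
          rw [← Real.rpow_one_add' (abs_nonneg _) (by linarith), Real.norm_eq_abs]
          congr 1; ring
  have hfY : ∀ x, f₀ x * Y x = ‖f₀ x‖ ^ q := fun x =>
    calc f₀ x * Y x = |f₀ x| * (|f₀ x| * |f₀ x| ^ (q - 2)) := by
          simp only [Y]; rw [← mul_assoc, ← mul_assoc, abs_mul_abs_self]
      _ = ‖f₀ x‖ ^ q := by
          rw [← Real.rpow_one_add' (abs_nonneg _) (by linarith),
            ← Real.rpow_one_add' (abs_nonneg _) (by linarith), Real.norm_eq_abs]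
          congr 1; ring
  have hNY : eLpNorm Y (ENNReal.ofReal q') μ = N ^ (q - 1) := by
    rw [eLpNorm_congr_norm_ae (g := fun x => ‖f₀ x‖ ^ (q - 1))
        (ae_of_all _ fun x => (hY_norm x).trans (Real.norm_of_nonneg (by positivity)).symm),
      eLpNorm_norm_rpow _ hq1, ← ENNReal.ofReal_mul hqq'.symm.nonneg, mul_comm,
      hqq'.sub_one_mul_conj, eLpNorm_congr_ae hff₀.symm]
  have hNq : N ^ q = ENNReal.ofReal (∫ x, f x * Y x ∂μ) := by
    have hint := (hf.ae_eq hff₀).integrable_norm_rpow (by simp [hqq'.pos]) (by simp)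
    rw [ENNReal.toReal_ofReal hqq'.nonneg] at hint
    calc N ^ q = eLpNorm (fun x => ‖f₀ x‖ ^ q) 1 μ := by
          rw [eLpNorm_norm_rpow _ hqq'.pos, one_mul, eLpNorm_congr_ae hff₀.symm]
      _ = ENNReal.ofReal (∫ x, ‖f₀ x‖ ^ q ∂μ) := by
          rw [eLpNorm_one_eq_lintegral_enorm, ← ofReal_integral_norm_eq_lintegral_enorm hint]
          simp only [Real.norm_eq_abs, abs_of_nonneg (Real.rpow_nonneg (abs_nonneg _) _)]
      _ = ENNReal.ofReal (∫ x, f x * Y x ∂μ) := by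
          congr 1
          refine integral_congr_ae ?_
          filter_upwards [hff₀] with x hx
          rw [hx, hfY]
  have hYmem : MemLp Y (ENNReal.ofReal q') μ :=
    ⟨hYm.aestronglyMeasurable, by
      rw [hNY]; exact ENNReal.rpow_lt_top_of_nonneg hq1.le hf.2.ne⟩
  have key : N * N ^ (q - 1) ≤ C * N ^ (q - 1) :=
    calc N * N ^ (q - 1) = N ^ q := by
          conv_rhs => rw [← add_sub_cancel 1 q]
          rw [ENNReal.rpow_add_of_nonneg _ _ zero_le_one hq1.le, ENNReal.rpow_one]
      _ = ENNReal.ofReal (∫ x, f x * Y x ∂μ) := hNq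
      _ ≤ C * eLpNorm Y (ENNReal.ofReal q') μ := h Y hYm hYmem
      _ = C * N ^ (q - 1) := by rw [hNY]
  rcases eq_or_ne N 0 with hN0 | hN0
  · simp [hN0]
  exact (ENNReal.mul_le_mul_iff_left (ENNReal.rpow_pos (pos_iff_ne_zero.2 hN0) hf.2.ne).ne'
    (ENNReal.rpow_ne_top_of_nonneg hq1.le hf.2.ne)).mp key

end

section Girsanov

variable {Ω : Type*} [MeasurableSpace Ω]

/-- `Z` is `Z(X)`. -/
def IsGirsanovDual (P : Measure Ω) (τ : Ω → Ω) (ρ : Ω → ℝ) (q : ℝ) (X Z : Ω → ℝ) : Prop :=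
  ∀ Y : Ω → ℝ, MemLp Y (ENNReal.ofReal (q / (q - 1))) P →
    ∫ ω, Z ω * Y ω ∂P = ∫ ω, X ω * ρ ω * Y (τ ω) ∂P

variable {P : Measure Ω} {τ : Ω → Ω} {ρ : Ω → ℝ}

theorem map_withDensity_enorm_eq_of_integral_comp_mul [IsFiniteMeasure P] (hτ : Measurable τ)
    (hρ0 : 0 ≤ᵐ[P] ρ) (hρ : Integrable ρ P)
    (hGirsanov : ∀ Y : Ω → ℝ, Integrable Y P → ∫ ω, Y (τ ω) * ρ ω ∂P = ∫ ω, Y ω ∂P) :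
    (P.withDensity fun ω => ‖ρ ω‖ₑ).map τ = P := by
  ext s hs
  have hind : (τ ⁻¹' s).indicator ρ = fun ω => s.indicator 1 (τ ω) * ρ ω := by
    ext ω; by_cases h : τ ω ∈ s <;> simp [h]
  calc (P.withDensity fun ω => ‖ρ ω‖ₑ).map τ s = ∫⁻ ω in τ ⁻¹' s, ‖ρ ω‖ₑ ∂P := by
        rw [Measure.map_apply hτ hs, withDensity_apply _ (hτ hs)]
    _ = ENNReal.ofReal (∫ ω in τ ⁻¹' s, ρ ω ∂P) := by
        rw [← ofReal_integral_norm_eq_lintegral_enorm hρ.integrableOn]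
        congr 1
        refine integral_congr_ae ?_
        filter_upwards [ae_restrict_of_ae hρ0] with ω hω using Real.norm_of_nonneg hω
    _ = P s := by
        rw [← integral_indicator (hτ hs), hind,
          hGirsanov (s.indicator 1) ((integrable_const (1 : ℝ)).indicator hs),
          integral_indicator_one hs, ofReal_measureReal]

theorem lintegral_enorm_mul_density_comp_le (hτ : Measurable τ) (hρ : AEStronglyMeasurable ρ P)
    (hmap : (P.withDensity fun ω => ‖ρ ω‖ₑ).map τ = P)
    {q q' p p' : ℝ} (hqq' : q.HolderConjugate q') (hpp' : p.HolderConjugate p')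
    {X Y : Ω → ℝ} (hX : AEStronglyMeasurable X P) (hY : AEStronglyMeasurable Y P) :
    ∫⁻ ω, ‖X ω * ρ ω * Y (τ ω)‖ₑ ∂P ≤
      eLpNorm ρ (ENNReal.ofReal p') P ^ (1 / q) * eLpNorm X (ENNReal.ofReal (q * p)) P *
        eLpNorm Y (ENNReal.ofReal q') P := by
  set Pρ := P.withDensity fun ω => ‖ρ ω‖ₑ
  have := hqq'.ennrealOfReal
  have hYmap : AEStronglyMeasurable Y (Pρ.map τ) := by rwa [hmap]
  have hYτ : AEStronglyMeasurable (Y ∘ τ) Pρ := hYmap.comp_aemeasurable hτ.aemeasurable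
  have hXρ : AEStronglyMeasurable X Pρ := hX.mono_ac (withDensity_absolutelyContinuous _ _)
  calc ∫⁻ ω, ‖X ω * ρ ω * Y (τ ω)‖ₑ ∂P = ∫⁻ ω, ‖ρ ω‖ₑ * ‖(X • (Y ∘ τ)) ω‖ₑ ∂P := by
        congr 1; ext ω
        simp only [Pi.smul_apply', Function.comp_apply, smul_eq_mul, enorm_mul]
        ring
    _ = eLpNorm (X • (Y ∘ τ)) 1 Pρ := by
        rw [eLpNorm_one_eq_lintegral_enorm,
          lintegral_withDensity_eq_lintegral_mul₀' hρ.enorm (hXρ.smul hYτ).enorm]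
        rfl
    _ ≤ eLpNorm X (ENNReal.ofReal q) Pρ * eLpNorm (Y ∘ τ) (ENNReal.ofReal q') Pρ :=
        eLpNorm_smul_le_mul_eLpNorm hYτ hXρ
    _ = eLpNorm X (ENNReal.ofReal q) Pρ * eLpNorm Y (ENNReal.ofReal q') P := by
        rw [← eLpNorm_map_measure hYmap hτ.aemeasurable, hmap]
    _ ≤ _ := by
        gcongr
        exact eLpNorm_withDensity_enorm_le hqq'.pos hpp' hX hρ

theorem integrable_mul_density_comp (hτ : Measurable τ)
    (hmap : (P.withDensity fun ω => ‖ρ ω‖ₑ).map τ = P)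
    {q q' p p' : ℝ} (hqq' : q.HolderConjugate q') (hpp' : p.HolderConjugate p')
    (hρ : MemLp ρ (ENNReal.ofReal p') P) {X Y : Ω → ℝ} (hX : MemLp X (ENNReal.ofReal (q * p)) P)
    (hYm : StronglyMeasurable Y) (hY : MemLp Y (ENNReal.ofReal q') P) :
    Integrable (fun ω => X ω * ρ ω * Y (τ ω)) P := by
  refine ⟨(hX.1.mul hρ.1).mul (hYm.comp_measurable hτ).aestronglyMeasurable, ?_⟩
  refine (lintegral_enorm_mul_density_comp_le hτ hρ.1 hmap hqq' hpp' hX.1 hY.1).trans_lt ?_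
  exact ENNReal.mul_lt_top (ENNReal.mul_lt_top
    (ENNReal.rpow_lt_top_of_nonneg (by simp [hqq'.pos.le]) hρ.2.ne) hX.2) hY.2

theorem IsGirsanovDual.ae_eq_smul_add [IsFiniteMeasure P] {q p : ℝ} (hτ : Measurable τ)
    (hmap : (P.withDensity fun ω => ‖ρ ω‖ₑ).map τ = P) (hq : 1 < q) (hp : 1 < p)
    (hρ : MemLp ρ (ENNReal.ofReal (p / (p - 1))) P)
    {a : ℝ} {X X' Z Z' Z'' : Ω → ℝ}
    (hX : MemLp X (ENNReal.ofReal (q * p)) P) (hX' : MemLp X' (ENNReal.ofReal (q * p)) P)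
    (hZ : MemLp Z (ENNReal.ofReal q) P) (hZ' : MemLp Z' (ENNReal.ofReal q) P)
    (hZ'' : MemLp Z'' (ENNReal.ofReal q) P) (hXZ : IsGirsanovDual P τ ρ q X Z)
    (hXZ' : IsGirsanovDual P τ ρ q X' Z')
    (hXZ'' : IsGirsanovDual P τ ρ q (fun ω => a * X ω + X' ω) Z'') :
    Z'' =ᵐ[P] fun ω => a * Z ω + Z' ω := by
  have hqq' : q.HolderConjugate (q / (q - 1)) := .conjExponent hq
  have hpp' : p.HolderConjugate (p / (p - 1)) := .conjExponent hp
  have := hqq'.ennrealOfReal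
  have hq1 : (1 : ℝ≥0∞) ≤ ENNReal.ofReal q := by simpa using hq.le
  refine ae_eq_of_forall_integral_mul_eq (r := ENNReal.ofReal (q / (q - 1)))
    (hZ''.integrable hq1) (((hZ.integrable hq1).const_mul a).add (hZ'.integrable hq1))
    fun Y hYm hY => ?_
  have hXY := integrable_mul_density_comp hτ hmap hqq' hpp' hρ hX hYm hY
  have hX'Y := integrable_mul_density_comp hτ hmap hqq' hpp' hρ hX' hYm hY
  have hZY : Integrable (fun ω => Z ω * Y ω) P := hZ.integrable_mul hY
  have hZ'Y : Integrable (fun ω => Z' ω * Y ω) P := hZ'.integrable_mul hY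
  calc ∫ ω, Z'' ω * Y ω ∂P = ∫ ω, (a * X ω + X' ω) * ρ ω * Y (τ ω) ∂P := hXZ'' Y hY
    _ = a * ∫ ω, X ω * ρ ω * Y (τ ω) ∂P + ∫ ω, X' ω * ρ ω * Y (τ ω) ∂P := by
        rw [← integral_const_mul, ← integral_add (hXY.const_mul a) hX'Y]
        congr 1; ext ω; ring
    _ = a * ∫ ω, Z ω * Y ω ∂P + ∫ ω, Z' ω * Y ω ∂P := by rw [hXZ Y hY, hXZ' Y hY]
    _ = ∫ ω, (a * Z ω + Z' ω) * Y ω ∂P := by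
        rw [← integral_const_mul, ← integral_add (hZY.const_mul a) hZ'Y]
        congr 1; ext ω; ring

theorem IsGirsanovDual.eLpNorm_le {q p : ℝ} (hτ : Measurable τ)
    (hmap : (P.withDensity fun ω => ‖ρ ω‖ₑ).map τ = P) (hq : 1 < q) (hp : 1 < p)
    (hρ : MemLp ρ (ENNReal.ofReal (p / (p - 1))) P)
    {X Z : Ω → ℝ} (hX : MemLp X (ENNReal.ofReal (q * p)) P)
    (hZ : MemLp Z (ENNReal.ofReal q) P) (hXZ : IsGirsanovDual P τ ρ q X Z) :
    eLpNorm Z (ENNReal.ofReal q) P ≤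
      eLpNorm ρ (ENNReal.ofReal (p / (p - 1))) P ^ (1 / q) *
        eLpNorm X (ENNReal.ofReal (q * p)) P := by
  have hqq' : q.HolderConjugate (q / (q - 1)) := .conjExponent hq
  have hpp' : p.HolderConjugate (p / (p - 1)) := .conjExponent hp
  refine eLpNorm_le_of_forall_integral_mul_le hqq' hZ fun Y _ hY => ?_
  rw [hXZ Y hY]
  exact (Real.ofReal_le_enorm _).trans ((enorm_integral_le_lintegral_enorm _).trans
    (lintegral_enorm_mul_density_comp_le hτ hρ.1 hmap hqq' hpp' hX.1 hY.1))

end Girsanov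

theorem girsanov_operator_linear_continuous_general
    {Ω : Type*} [MeasurableSpace Ω] (P : Measure Ω) [IsProbabilityMeasure P]
    (τ : Ω → Ω) (hτ : Measurable τ)
    (ρ : Ω → ℝ) (hρ0 : 0 ≤ᵐ[P] ρ)
    (hρLp : ∀ r : ℝ, 1 ≤ r → MemLp ρ (ENNReal.ofReal r) P)
    (hGirsanov : ∀ Y : Ω → ℝ, Integrable Y P →
      ∫ ω, Y (τ ω) * ρ ω ∂P = ∫ ω, Y ω ∂P)
    (q p : ℝ) (hq : 1 < q) (hp : 1 < p)
    (a : ℝ) (X X' : Ω → ℝ)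
    (hX : MemLp X (ENNReal.ofReal (q * p)) P)
    (hX' : MemLp X' (ENNReal.ofReal (q * p)) P)
    (ZX ZX' ZaXX' : Ω → ℝ)
    (hZX : MemLp ZX (ENNReal.ofReal q) P)
    (hZX' : MemLp ZX' (ENNReal.ofReal q) P)
    (hZaXX' : MemLp ZaXX' (ENNReal.ofReal q) P)
    (hZXdual : ∀ Y : Ω → ℝ, MemLp Y (ENNReal.ofReal (q / (q - 1))) P →
      ∫ ω, ZX ω * Y ω ∂P = ∫ ω, X ω * ρ ω * Y (τ ω) ∂P)
    (hZX'dual : ∀ Y : Ω → ℝ, MemLp Y (ENNReal.ofReal (q / (q - 1))) P →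
      ∫ ω, ZX' ω * Y ω ∂P = ∫ ω, X' ω * ρ ω * Y (τ ω) ∂P)
    (hZaXX'dual : ∀ Y : Ω → ℝ, MemLp Y (ENNReal.ofReal (q / (q - 1))) P →
      ∫ ω, ZaXX' ω * Y ω ∂P = ∫ ω, (a * X ω + X' ω) * ρ ω * Y (τ ω) ∂P) :
    ZaXX' =ᵐ[P] (fun ω => a * ZX ω + ZX' ω) ∧
    (eLpNorm ZX (ENNReal.ofReal q) P).toReal ≤
      ((eLpNorm ρ (ENNReal.ofReal (p / (p - 1))) P).toReal) ^ (1 / q) *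
        (eLpNorm X (ENNReal.ofReal (q * p)) P).toReal := by
  have hρ : Integrable ρ P := by
    simpa using (hρLp 1 le_rfl).integrable (by simp)
  have hmap := map_withDensity_enorm_eq_of_integral_comp_mul hτ hρ0 hρ hGirsanov
  have hρp' := hρLp (p / (p - 1)) (Real.HolderConjugate.conjExponent hp).symm.lt.le
  refine ⟨IsGirsanovDual.ae_eq_smul_add hτ hmap hq hp hρp' hX hX' hZX hZX' hZaXX'
    hZXdual hZX'dual hZaXX'dual, ?_⟩
  have hbound := IsGirsanovDual.eLpNorm_le hτ hmap hq hp hρp' hX hZX hZXdual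
  have hfin : eLpNorm ρ (ENNReal.ofReal (p / (p - 1))) P ^ (1 / q) *
      eLpNorm X (ENNReal.ofReal (q * p)) P ≠ ⊤ :=
    ENNReal.mul_ne_top (ENNReal.rpow_ne_top_of_nonneg (by positivity) hρp'.2.ne) hX.2.ne
  simpa [ENNReal.toReal_mul, ENNReal.toReal_rpow] using ENNReal.toReal_mono hfin hbound

/-- In the abstract Girsanov setting, the operator `Z` is linear on
`L^{qp}(P)`: if `ZX`, `ZX'` and `ZaXX'` satisfy the duality identity for `X`, `X'`
and `a·X + X'` respectively, then `ZaXX' = a·ZX + ZX'` `P`-a.e.; moreover `Z` is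
continuous, with `‖Z(X)‖_{L^q} ≤ ‖ρ‖_{L^{p'}}^{1/q} · ‖X‖_{L^{qp}}`. -/
theorem girsanov_operator_linear_continuous
    {Ω : Type*} [MeasurableSpace Ω] (P : Measure Ω) [IsProbabilityMeasure P]
    (τ : Ω → Ω) (hτ : Measurable τ)
    (ρ : Ω → ℝ) (hρm : Measurable ρ) (hρ0 : 0 ≤ᵐ[P] ρ)
    (hρLp : ∀ r : ℝ, 1 ≤ r → MemLp ρ (ENNReal.ofReal r) P)
    (hGirsanov : ∀ Y : Ω → ℝ, Integrable Y P →
      ∫ ω, Y (τ ω) * ρ ω ∂P = ∫ ω, Y ω ∂P)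
    (q p : ℝ) (hq : 1 < q) (hp : 1 < p)
    (a : ℝ) (X X' : Ω → ℝ)
    (hX : MemLp X (ENNReal.ofReal (q * p)) P)
    (hX' : MemLp X' (ENNReal.ofReal (q * p)) P)
    (ZX ZX' ZaXX' : Ω → ℝ)
    (hZX : MemLp ZX (ENNReal.ofReal q) P)
    (hZX' : MemLp ZX' (ENNReal.ofReal q) P)
    (hZaXX' : MemLp ZaXX' (ENNReal.ofReal q) P)
    (hZXdual : ∀ Y : Ω → ℝ, MemLp Y (ENNReal.ofReal (q / (q - 1))) P →
      ∫ ω, ZX ω * Y ω ∂P = ∫ ω, X ω * ρ ω * Y (τ ω) ∂P)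
    (hZX'dual : ∀ Y : Ω → ℝ, MemLp Y (ENNReal.ofReal (q / (q - 1))) P →
      ∫ ω, ZX' ω * Y ω ∂P = ∫ ω, X' ω * ρ ω * Y (τ ω) ∂P)
    (hZaXX'dual : ∀ Y : Ω → ℝ, MemLp Y (ENNReal.ofReal (q / (q - 1))) P →
      ∫ ω, ZaXX' ω * Y ω ∂P = ∫ ω, (a * X ω + X' ω) * ρ ω * Y (τ ω) ∂P) :
    ZaXX' =ᵐ[P] (fun ω => a * ZX ω + ZX' ω) ∧
    (eLpNorm ZX (ENNReal.ofReal q) P).toReal ≤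
      ((eLpNorm ρ (ENNReal.ofReal (p / (p - 1))) P).toReal) ^ (1 / q) *
        (eLpNorm X (ENNReal.ofReal (q * p)) P).toReal :=
  girsanov_operator_linear_continuous_general P τ hτ ρ hρ0 hρLp hGirsanov q p hq hp a X X' hX hX' ZX
    ZX' ZaXX' hZX hZX' hZaXX' hZXdual hZX'dual hZaXX'dual
end

section
/- Let q ∈ (1, ∞) and let φ : ℝ → ℝ be a convex function. In the abstract Girsanov setting, if X ∈ L^r(P) for some r > q and φ∘X ∈ L^{r'}(P) for some r' > q, then φ(Z(X)) ≤ Z(φ∘X) P-a.e. (Jensen's inequality for the operator Z). -/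
/-!
`Z` is a positive linear operator that fixes constants. Testing the duality identity against
indicators gives `∫_S Z(X) = ∫_{τ⁻¹ S} X ρ`, and the Girsanov identity gives
`∫_{τ⁻¹ S} ρ = P(S)`; hence `Z(a X + b) = a Z(X) + b`, and `Z` preserves a.e. inequalities since
`ρ ≥ 0`. Applying `Z` to the supporting lines `φ t + φ'₊(t) (x - t) ≤ φ x` at the countably many
rational `t` gives the inequality for all of them at once, a.e., and their supremum is `φ`.
-/

open MeasureTheory Set Filter Topology

namespace ConvexOn

variable {φ : ℝ → ℝ}

lemma add_rightDeriv_mul_sub_le (hφ : ConvexOn ℝ univ φ) (t x : ℝ) :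
    φ t + derivWithin φ (Ioi t) t * (x - t) ≤ φ x := by
  rcases lt_trichotomy x t with hxt | rfl | htx
  · have h := (hφ.slope_le_leftDeriv_of_mem_interior (by simp) (by simp) hxt).trans
      (hφ.leftDeriv_le_rightDeriv_of_mem_interior (x := t) (by simp))
    rw [slope_def_field, div_le_iff₀ (sub_pos.2 hxt)] at h
    linarith
  · simp
  · have h := hφ.rightDeriv_le_slope_of_mem_interior (by simp) (mem_univ x) htx
    rw [slope_def_field, le_div_iff₀ (sub_pos.2 htx)] at h
    linarith

-- For rational `t` just right of `x` the slopes are at most `φ'₊(x + 1)`, so the supporting lines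
-- at `t` dominate `φ t + φ'₊(x + 1) (x - t)`, which is continuous in `t` and equals `φ x` at `x`.
lemma le_of_forall_rat_add_rightDeriv_mul_sub_le (hφ : ConvexOn ℝ univ φ) {x c : ℝ}
    (h : ∀ t : ℚ, φ t + derivWithin φ (Ioi (t : ℝ)) t * (x - t) ≤ c) : φ x ≤ c := by
  set d := derivWithin φ (Ioi (x + 1)) (x + 1)
  have hle : ∀ t : ℚ, x < t → t < x + 1 → φ t + d * (x - t) ≤ c := fun t hxt htx ↦ by
    have hd : derivWithin φ (Ioi (t : ℝ)) t ≤ d :=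
      hφ.monotoneOn_rightDeriv (by simp) (by simp) htx.le
    linarith [h t, mul_le_mul_of_nonpos_right hd (by linarith : x - t ≤ 0)]
  have hcont : Continuous fun y ↦ φ y + d * (x - y) :=
    (continuousOn_univ.1 (hφ.continuousOn isOpen_univ)).add (by fun_prop)
  by_contra! hlt
  have hev : ∀ᶠ y in 𝓝 x, c < φ y + d * (x - y) :=
    continuousAt_const.eventually_lt hcont.continuousAt (by simpa using hlt)
  obtain ⟨l, u, ⟨hlx, hxu⟩, hsub⟩ := mem_nhds_iff_exists_Ioo_subset.1 hev
  obtain ⟨t, hxt, htu⟩ := exists_rat_btwn (lt_min hxu (lt_add_one x))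
  exact (hle t hxt (htu.trans_le (min_le_right _ _))).not_gt
    (hsub ⟨hlx.trans hxt, htu.trans_le (min_le_left _ _)⟩)

end ConvexOn

lemma MeasureTheory.MemLp.integrable_mul_of_forall_memLp {Ω : Type*} [MeasurableSpace Ω]
    {P : Measure Ω} {F ρ : Ω → ℝ} {s : ℝ} (hs : 1 < s) (hF : MemLp F (ENNReal.ofReal s) P)
    (hρ : ∀ r : ℝ, 1 ≤ r → MemLp ρ (ENNReal.ofReal r) P) : Integrable (fun ω ↦ F ω * ρ ω) P :=
  have hconj := Real.HolderConjugate.conjExponent hs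
  have := hconj.ennrealOfReal
  hF.integrable_mul (hρ _ hconj.symm.lt.le)

/-- `Z` is `Z(X)` in the weak sense: the duality identity defining `Z(X)`, tested only against
indicators `Y = 1_S`, together with the integrability that makes it linear in `(X, Z)`. -/
structure IsGirsanovTransform {Ω : Type*} [MeasurableSpace Ω] (P : Measure Ω) (τ : Ω → Ω)
    (ρ X Z : Ω → ℝ) : Prop where
  integrable : Integrable Z P
  integrable_mul : Integrable (fun ω ↦ X ω * ρ ω) P
  setIntegral_eq : ∀ S, MeasurableSet S → ∫ ω in S, Z ω ∂P = ∫ ω in τ ⁻¹' S, X ω * ρ ω ∂P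

namespace IsGirsanovTransform

variable {Ω : Type*} [MeasurableSpace Ω] {P : Measure Ω} {τ : Ω → Ω} {ρ X X₁ X₂ Z Z₁ Z₂ : Ω → ℝ}

lemma of_dual [IsFiniteMeasure P] (hτ : Measurable τ) {p : ENNReal} (hZ : Integrable Z P)
    (hXρ : Integrable (fun ω ↦ X ω * ρ ω) P)
    (hdual : ∀ Y : Ω → ℝ, MemLp Y p P → ∫ ω, Z ω * Y ω ∂P = ∫ ω, X ω * ρ ω * Y (τ ω) ∂P) :
    IsGirsanovTransform P τ ρ X Z where
  integrable := hZ
  integrable_mul := hXρ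
  setIntegral_eq S hS := by
    have h := hdual (S.indicator 1) ((memLp_const 1).indicator hS)
    have hL : ∀ ω, Z ω * S.indicator 1 ω = S.indicator Z ω := fun ω ↦ by
      by_cases hω : ω ∈ S <;> simp [hω]
    have hR : ∀ ω, X ω * ρ ω * S.indicator 1 (τ ω) =
        (τ ⁻¹' S).indicator (fun ω ↦ X ω * ρ ω) ω := fun ω ↦ by
      by_cases hω : τ ω ∈ S <;> simp [hω]
    simp only [hL, hR] at h
    rwa [integral_indicator hS, integral_indicator (hτ hS)] at h

lemma const [IsFiniteMeasure P] (hτ : Measurable τ) (hρ : Integrable ρ P)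
    (hGirsanov : ∀ Y : Ω → ℝ, Integrable Y P → ∫ ω, Y (τ ω) * ρ ω ∂P = ∫ ω, Y ω ∂P) (c : ℝ) :
    IsGirsanovTransform P τ ρ (fun _ ↦ c) (fun _ ↦ c) where
  integrable := integrable_const c
  integrable_mul := hρ.const_mul c
  setIntegral_eq S hS := by
    have h := hGirsanov (S.indicator fun _ ↦ c) ((integrable_const c).indicator hS)
    have hY : ∀ ω, S.indicator (fun _ ↦ c) (τ ω) * ρ ω =
        (τ ⁻¹' S).indicator (fun ω ↦ c * ρ ω) ω := fun ω ↦ by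
      by_cases hω : τ ω ∈ S <;> simp [hω]
    simp only [hY] at h
    rw [integral_indicator (hτ hS), integral_indicator hS] at h
    exact h.symm

lemma add (h₁ : IsGirsanovTransform P τ ρ X₁ Z₁) (h₂ : IsGirsanovTransform P τ ρ X₂ Z₂) :
    IsGirsanovTransform P τ ρ (X₁ + X₂) (Z₁ + Z₂) where
  integrable := h₁.integrable.add h₂.integrable
  integrable_mul := by
    simpa only [Pi.add_apply, add_mul] using h₁.integrable_mul.fun_add h₂.integrable_mul
  setIntegral_eq S hS := by
    simp only [Pi.add_apply, add_mul]
    rw [integral_add h₁.integrable.integrableOn h₂.integrable.integrableOn,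
      integral_add h₁.integrable_mul.integrableOn h₂.integrable_mul.integrableOn,
      h₁.setIntegral_eq S hS, h₂.setIntegral_eq S hS]

lemma sub (h₁ : IsGirsanovTransform P τ ρ X₁ Z₁) (h₂ : IsGirsanovTransform P τ ρ X₂ Z₂) :
    IsGirsanovTransform P τ ρ (X₁ - X₂) (Z₁ - Z₂) where
  integrable := h₁.integrable.sub h₂.integrable
  integrable_mul := by
    simpa only [Pi.sub_apply, sub_mul] using h₁.integrable_mul.sub' h₂.integrable_mul
  setIntegral_eq S hS := by
    simp only [Pi.sub_apply, sub_mul]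
    rw [integral_sub h₁.integrable.integrableOn h₂.integrable.integrableOn,
      integral_sub h₁.integrable_mul.integrableOn h₂.integrable_mul.integrableOn,
      h₁.setIntegral_eq S hS, h₂.setIntegral_eq S hS]

lemma const_mul (h : IsGirsanovTransform P τ ρ X Z) (a : ℝ) :
    IsGirsanovTransform P τ ρ (fun ω ↦ a * X ω) (fun ω ↦ a * Z ω) where
  integrable := h.integrable.const_mul a
  integrable_mul := by simpa only [Pi.mul_def, mul_assoc] using h.integrable_mul.const_mul a
  setIntegral_eq S hS := by
    simp only [mul_assoc]
    rw [integral_const_mul, integral_const_mul, h.setIntegral_eq S hS]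

lemma ae_nonneg (h : IsGirsanovTransform P τ ρ X Z) (hρ : 0 ≤ᵐ[P] ρ) (hX : 0 ≤ᵐ[P] X) :
    0 ≤ᵐ[P] Z :=
  ae_nonneg_of_forall_setIntegral_nonneg h.integrable fun S hS _ ↦ by
    rw [h.setIntegral_eq S hS]
    exact integral_nonneg_of_ae <| ae_restrict_of_ae <| by
      filter_upwards [hρ, hX] with ω hρω hXω
      exact mul_nonneg hXω hρω

lemma ae_le_of_ae_le (h₁ : IsGirsanovTransform P τ ρ X₁ Z₁) (h₂ : IsGirsanovTransform P τ ρ X₂ Z₂)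
    (hρ : 0 ≤ᵐ[P] ρ) (hX : X₁ ≤ᵐ[P] X₂) : Z₁ ≤ᵐ[P] Z₂ := by
  have h := (h₂.sub h₁).ae_nonneg hρ (by filter_upwards [hX] with ω hω using sub_nonneg.2 hω)
  filter_upwards [h] with ω hω using sub_nonneg.1 hω

end IsGirsanovTransform

theorem girsanov_operator_jensen_general
    {Ω : Type*} [MeasurableSpace Ω] (P : Measure Ω) [IsProbabilityMeasure P]
    (τ : Ω → Ω) (hτ : Measurable τ)
    (ρ : Ω → ℝ) (hρ0 : 0 ≤ᵐ[P] ρ)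
    (hρLp : ∀ r : ℝ, 1 ≤ r → MemLp ρ (ENNReal.ofReal r) P)
    (hGirsanov : ∀ Y : Ω → ℝ, Integrable Y P →
      ∫ ω, Y (τ ω) * ρ ω ∂P = ∫ ω, Y ω ∂P)
    (q r r' : ℝ) (hq : 1 < q) (hr : q < r) (hr' : q < r')
    (φ : ℝ → ℝ) (hφ : ConvexOn ℝ Set.univ φ)
    (X : Ω → ℝ)
    (hX : MemLp X (ENNReal.ofReal r) P)
    (hφX : MemLp (fun ω => φ (X ω)) (ENNReal.ofReal r') P)
    (ZX ZφX : Ω → ℝ)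
    (hZX : MemLp ZX (ENNReal.ofReal q) P)
    (hZφX : MemLp ZφX (ENNReal.ofReal q) P)
    (hZXdual : ∀ Y : Ω → ℝ, MemLp Y (ENNReal.ofReal (q / (q - 1))) P →
      ∫ ω, ZX ω * Y ω ∂P = ∫ ω, X ω * ρ ω * Y (τ ω) ∂P)
    (hZφXdual : ∀ Y : Ω → ℝ, MemLp Y (ENNReal.ofReal (q / (q - 1))) P →
      ∫ ω, ZφX ω * Y ω ∂P = ∫ ω, φ (X ω) * ρ ω * Y (τ ω) ∂P) :
    (fun ω => φ (ZX ω)) ≤ᵐ[P] ZφX := by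
  have hq1 : 1 ≤ ENNReal.ofReal q := ENNReal.one_le_ofReal.2 hq.le
  have hZX' : IsGirsanovTransform P τ ρ X ZX := .of_dual hτ (hZX.integrable hq1)
    (hX.integrable_mul_of_forall_memLp (hq.trans hr) hρLp) hZXdual
  have hZφX' : IsGirsanovTransform P τ ρ (fun ω ↦ φ (X ω)) ZφX := .of_dual hτ
    (hZφX.integrable hq1) (hφX.integrable_mul_of_forall_memLp (hq.trans hr') hρLp) hZφXdual
  have hconst := IsGirsanovTransform.const hτ ((hρLp 1 le_rfl).integrable (by simp)) hGirsanov
  have hsupport (t : ℚ) :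
      ∀ᵐ ω ∂P, φ t + derivWithin φ (Ioi (t : ℝ)) t * (ZX ω - t) ≤ ZφX ω :=
    ((hconst (φ t)).add ((hZX'.sub (hconst t)).const_mul _)).ae_le_of_ae_le hZφX' hρ0
      (ae_of_all _ fun ω ↦ hφ.add_rightDeriv_mul_sub_le t (X ω))
  filter_upwards [ae_all_iff.2 hsupport] with ω hω
  exact hφ.le_of_forall_rat_add_rightDeriv_mul_sub_le hω

/-- Jensen's inequality for the operator `Z`: In the abstract Girsanov
setting, if `φ : ℝ → ℝ` is convex, `X ∈ L^r(P)` for some `r > q` and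
`φ∘X ∈ L^{r'}(P)` for some `r' > q`, then `φ(Z(X)) ≤ Z(φ∘X)` `P`-a.e. -/
theorem girsanov_operator_jensen
    {Ω : Type*} [MeasurableSpace Ω] (P : Measure Ω) [IsProbabilityMeasure P]
    (τ : Ω → Ω) (hτ : Measurable τ)
    (ρ : Ω → ℝ) (hρm : Measurable ρ) (hρ0 : 0 ≤ᵐ[P] ρ)
    (hρLp : ∀ r : ℝ, 1 ≤ r → MemLp ρ (ENNReal.ofReal r) P)
    (hGirsanov : ∀ Y : Ω → ℝ, Integrable Y P →
      ∫ ω, Y (τ ω) * ρ ω ∂P = ∫ ω, Y ω ∂P)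
    (q r r' : ℝ) (hq : 1 < q) (hr : q < r) (hr' : q < r')
    (φ : ℝ → ℝ) (hφ : ConvexOn ℝ Set.univ φ)
    (X : Ω → ℝ)
    (hX : MemLp X (ENNReal.ofReal r) P)
    (hφX : MemLp (fun ω => φ (X ω)) (ENNReal.ofReal r') P)
    (ZX ZφX : Ω → ℝ)
    (hZX : MemLp ZX (ENNReal.ofReal q) P)
    (hZφX : MemLp ZφX (ENNReal.ofReal q) P)
    (hZXdual : ∀ Y : Ω → ℝ, MemLp Y (ENNReal.ofReal (q / (q - 1))) P →
      ∫ ω, ZX ω * Y ω ∂P = ∫ ω, X ω * ρ ω * Y (τ ω) ∂P)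
    (hZφXdual : ∀ Y : Ω → ℝ, MemLp Y (ENNReal.ofReal (q / (q - 1))) P →
      ∫ ω, ZφX ω * Y ω ∂P = ∫ ω, φ (X ω) * ρ ω * Y (τ ω) ∂P) :
    (fun ω => φ (ZX ω)) ≤ᵐ[P] ZφX :=
  girsanov_operator_jensen_general P τ hτ ρ hρ0 hρLp hGirsanov q r r' hq hr hr' φ hφ X hX hφX ZX ZφX
    hZX hZφX hZXdual hZφXdual
end

section
/- Let q ∈ (1, ∞). In the abstract Girsanov setting, for every X ∈ L^r(P) with r > q and every U ∈ L^∞(P), one has U·Z(X) = Z(X·(U∘τ)) P-a.e. (note that X·(U∘τ) ∈ L^r(P), so the right-hand side is well defined). -/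
open MeasureTheory

/-!
`U · Z(X)` satisfies the duality relation that characterizes `Z(X · (U ∘ τ))`: for a test
function `Y ∈ L^{q'}` also `U · Y ∈ L^{q'}`, and
`E[U Z(X) Y] = E[Z(X) (U Y)] = E[X ρ (U ∘ τ)(Y ∘ τ)] = E[Z(X · (U ∘ τ)) Y]`.
Testing against indicators of measurable sets shows that two integrable functions with the
same pairings against `L^{q'}` agree almost everywhere.
-/

theorem ae_eq_of_forall_memLp_integral_mul_eq {α : Type*} [MeasurableSpace α] {μ : Measure α}
    {p : ENNReal} {f g : α → ℝ} (hf : Integrable f μ) (hg : Integrable g μ)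
    (hfg : ∀ Y : α → ℝ, MemLp Y p μ → ∫ x, f x * Y x ∂μ = ∫ x, g x * Y x ∂μ) :
    f =ᵐ[μ] g := by
  refine hf.ae_eq_of_forall_setIntegral_eq f g hg fun s hs hμs => ?_
  have h := hfg _ (memLp_indicator_const p hs (1 : ℝ) (Or.inr hμs.ne))
  simp only [← Set.indicator_mul_right, mul_one] at h
  rwa [integral_indicator hs, integral_indicator hs] at h

theorem girsanov_operator_module_property_general
    {Ω : Type*} [MeasurableSpace Ω] (P : Measure Ω) [IsProbabilityMeasure P]
    (τ : Ω → Ω)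
    (ρ : Ω → ℝ)
    (q : ℝ) (hq : 1 < q)
    (X : Ω → ℝ)
    (U : Ω → ℝ) (hU : MemLp U ⊤ P)
    (ZX ZXU : Ω → ℝ)
    (hZX : MemLp ZX (ENNReal.ofReal q) P)
    (hZXU : MemLp ZXU (ENNReal.ofReal q) P)
    (hZXdual : ∀ Y : Ω → ℝ, MemLp Y (ENNReal.ofReal (q / (q - 1))) P →
      ∫ ω, ZX ω * Y ω ∂P = ∫ ω, X ω * ρ ω * Y (τ ω) ∂P)
    (hZXUdual : ∀ Y : Ω → ℝ, MemLp Y (ENNReal.ofReal (q / (q - 1))) P →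
      ∫ ω, ZXU ω * Y ω ∂P = ∫ ω, (X ω * U (τ ω)) * ρ ω * Y (τ ω) ∂P) :
    (fun ω => U ω * ZX ω) =ᵐ[P] ZXU := by
  have hq1 : 1 ≤ ENNReal.ofReal q := ENNReal.one_le_ofReal.mpr hq.le
  refine ae_eq_of_forall_memLp_integral_mul_eq (p := ENNReal.ofReal (q / (q - 1)))
    ((hZX.smul hU).integrable hq1) (hZXU.integrable hq1) fun Y hY => ?_
  calc ∫ ω, U ω * ZX ω * Y ω ∂P = ∫ ω, ZX ω * (U ω * Y ω) ∂P := by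
        congr 1 with ω; ring
    _ = ∫ ω, X ω * ρ ω * (U (τ ω) * Y (τ ω)) ∂P := hZXdual _ (hY.smul hU)
    _ = ∫ ω, (X ω * U (τ ω)) * ρ ω * Y (τ ω) ∂P := by
        congr 1 with ω; ring
    _ = ∫ ω, ZXU ω * Y ω ∂P := (hZXUdual Y hY).symm

/-- In the abstract Girsanov setting, for every `X ∈ L^r(P)` with
`r > q` and every `U ∈ L^∞(P)`, one has `U·Z(X) = Z(X·(U∘τ))` `P`-a.e. -/
theorem girsanov_operator_module_property
    {Ω : Type*} [MeasurableSpace Ω] (P : Measure Ω) [IsProbabilityMeasure P]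
    (τ : Ω → Ω) (hτ : Measurable τ)
    (ρ : Ω → ℝ) (hρm : Measurable ρ) (hρ0 : 0 ≤ᵐ[P] ρ)
    (hρLp : ∀ r : ℝ, 1 ≤ r → MemLp ρ (ENNReal.ofReal r) P)
    (hGirsanov : ∀ Y : Ω → ℝ, Integrable Y P →
      ∫ ω, Y (τ ω) * ρ ω ∂P = ∫ ω, Y ω ∂P)
    (q r : ℝ) (hq : 1 < q) (hr : q < r)
    (X : Ω → ℝ) (hX : MemLp X (ENNReal.ofReal r) P)
    (U : Ω → ℝ) (hU : MemLp U ⊤ P)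
    (ZX ZXU : Ω → ℝ)
    (hZX : MemLp ZX (ENNReal.ofReal q) P)
    (hZXU : MemLp ZXU (ENNReal.ofReal q) P)
    (hZXdual : ∀ Y : Ω → ℝ, MemLp Y (ENNReal.ofReal (q / (q - 1))) P →
      ∫ ω, ZX ω * Y ω ∂P = ∫ ω, X ω * ρ ω * Y (τ ω) ∂P)
    (hZXUdual : ∀ Y : Ω → ℝ, MemLp Y (ENNReal.ofReal (q / (q - 1))) P →
      ∫ ω, ZXU ω * Y ω ∂P = ∫ ω, (X ω * U (τ ω)) * ρ ω * Y (τ ω) ∂P) :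
    (fun ω => U ω * ZX ω) =ᵐ[P] ZXU :=
  girsanov_operator_module_property_general P τ ρ q hq X U hU ZX ZXU hZX hZXU hZXdual hZXUdual
end

section
/- Let (Ω, 𝓕, μ) be a probability space, let p, q ∈ [1, ∞), and let T : L^p(μ) → L^q(μ) be a linear map that is monotone (if X ≤ X' μ-a.e. then T X ≤ T X' μ-a.e.) and unital (T 1 = 1, where 1 is the constant function one). Then for every convex function φ : ℝ → ℝ and every X ∈ L^p(μ) with φ∘X ∈ L^p(μ), one has φ(T X) ≤ T(φ∘X) μ-a.e. -/
open MeasureTheory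
open scoped ENNReal

/-!
A convex `φ : ℝ → ℝ` is the pointwise supremum of countably many affine functions
`x ↦ a i * x + b i` lying below it. A monotone unital linear map preserves each inequality
`a i * X + b i ≤ φ ∘ X`, giving `a i * T X + b i ≤ T (φ ∘ X)` outside a null set depending on `i`;
countability lets us take the supremum over `i` outside a single null set.
-/

section

variable {Ω : Type*} [MeasurableSpace Ω] {μ : Measure Ω} [IsFiniteMeasure μ] {p q : ℝ≥0∞}

lemma Lp.coeFn_smul_add_smul_one (f : Lp ℝ p μ) (a b : ℝ) :
    ((a • f + b • (memLp_const (1 : ℝ)).toLp (fun _ : Ω => (1 : ℝ)) : Lp ℝ p μ) : Ω → ℝ)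
      =ᵐ[μ] fun ω => a * f ω + b := by
  filter_upwards [Lp.coeFn_add (a • f) (b • (memLp_const (1 : ℝ)).toLp (fun _ : Ω => (1 : ℝ))),
    Lp.coeFn_smul a f, Lp.coeFn_smul b ((memLp_const (1 : ℝ)).toLp (fun _ : Ω => (1 : ℝ))),
    (memLp_const (1 : ℝ)).coeFn_toLp (μ := μ) (p := p)] with ω hadd hsmul hsmul_one hone
  rw [hadd, Pi.add_apply, hsmul, hsmul_one, Pi.smul_apply, Pi.smul_apply, hone, smul_eq_mul,
    smul_eq_mul, mul_one]

lemma ae_affine_le_map_of_monotone_of_map_one {T : Lp ℝ p μ →ₗ[ℝ] Lp ℝ q μ} (hTmono : Monotone T)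
    (hTunital : T ((memLp_const (1 : ℝ)).toLp (fun _ : Ω => (1 : ℝ)))
      = (memLp_const (1 : ℝ)).toLp (fun _ : Ω => (1 : ℝ)))
    {a b : ℝ} {X Y : Lp ℝ p μ} (h : ∀ᵐ ω ∂μ, a * X ω + b ≤ Y ω) :
    ∀ᵐ ω ∂μ, a * (T X : Lp ℝ q μ) ω + b ≤ (T Y : Lp ℝ q μ) ω := by
  have hle : a • X + b • (memLp_const (1 : ℝ)).toLp (fun _ : Ω => (1 : ℝ)) ≤ Y := by
    rw [← Lp.coeFn_le]
    filter_upwards [Lp.coeFn_smul_add_smul_one X a b, h] with ω hω hXY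
    rwa [hω]
  have hTle := hTmono hle
  rw [map_add, map_smul, map_smul, hTunital, ← Lp.coeFn_le] at hTle
  filter_upwards [Lp.coeFn_smul_add_smul_one (T X) a b, hTle] with ω hω hTXY
  rwa [← hω]

end

lemma ConvexOn.exists_nat_affine_iSup_eq {φ : ℝ → ℝ} (hφ : ConvexOn ℝ Set.univ φ) :
    ∃ a b : ℕ → ℝ, (∀ i x, a i * x + b i ≤ φ x) ∧ ∀ x, ⨆ i, a i * x + b i = φ x := by
  obtain ⟨l, c, hle, hsup⟩ :=
    hφ.real_univ_sSup_of_nat_affine_eq hφ.locallyLipschitz.continuous.lowerSemicontinuous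
  have hl (i : ℕ) (x : ℝ) : l i x = l i 1 * x := by
    rw [mul_comm, ← smul_eq_mul, ← map_smul, smul_eq_mul, mul_one]
  refine ⟨fun i => l i 1, c, fun i x => ?_, fun x => ?_⟩
  · simpa only [← hl, Pi.add_apply, Function.const_apply] using hle i x
  · simpa only [← hl, iSup_apply, Pi.add_apply, Function.const_apply] using congrFun hsup x

theorem operator_jensen_inequality_general
    {Ω : Type*} [MeasurableSpace Ω] (μ : Measure Ω) [IsProbabilityMeasure μ]
    (p q : ℝ≥0∞)
    (T : Lp ℝ p μ →ₗ[ℝ] Lp ℝ q μ)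
    (hTmono : ∀ X X' : Lp ℝ p μ, X ≤ X' → T X ≤ T X')
    (hTunital : T ((memLp_const (1 : ℝ)).toLp (fun _ : Ω => (1 : ℝ)))
      = (memLp_const (1 : ℝ)).toLp (fun _ : Ω => (1 : ℝ)))
    (φ : ℝ → ℝ) (hφ : ConvexOn ℝ Set.univ φ)
    (X : Lp ℝ p μ) (hφX : MemLp (fun ω => φ (X ω)) p μ) :
    ∀ᵐ ω ∂μ, φ ((T X : Lp ℝ q μ) ω) ≤ (T (hφX.toLp (fun ω => φ (X ω))) : Lp ℝ q μ) ω := by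
  obtain ⟨a, b, hle, hsup⟩ := hφ.exists_nat_affine_iSup_eq
  have hTaffine (i : ℕ) : ∀ᵐ ω ∂μ,
      a i * (T X : Lp ℝ q μ) ω + b i ≤ (T (hφX.toLp (fun ω => φ (X ω))) : Lp ℝ q μ) ω := by
    refine ae_affine_le_map_of_monotone_of_map_one (fun _ _ => hTmono _ _) hTunital ?_
    filter_upwards [hφX.coeFn_toLp] with ω hω
    rw [hω]
    exact hle i (X ω)
  filter_upwards [ae_all_iff.2 hTaffine] with ω hω
  rw [← hsup]
  exact ciSup_le hω

/-- operator Jensen inequality: Let `μ` be a probability measure,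
`p, q ∈ [1, ∞)`, and let `T : L^p(μ) → L^q(μ)` be linear, monotone and unital
(`T 1 = 1`). Then for every convex `φ : ℝ → ℝ` and every `X ∈ L^p(μ)` with
`φ∘X ∈ L^p(μ)`, one has `φ(T X) ≤ T(φ∘X)` `μ`-a.e. -/
theorem operator_jensen_inequality
    {Ω : Type*} [MeasurableSpace Ω] (μ : Measure Ω) [IsProbabilityMeasure μ]
    (p q : ℝ≥0∞) (hp1 : 1 ≤ p) (hp_top : p ≠ ∞) (hq1 : 1 ≤ q) (hq_top : q ≠ ∞)
    (T : Lp ℝ p μ →ₗ[ℝ] Lp ℝ q μ)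
    (hTmono : ∀ X X' : Lp ℝ p μ, X ≤ X' → T X ≤ T X')
    (hTunital : T ((memLp_const (1 : ℝ)).toLp (fun _ : Ω => (1 : ℝ)))
      = (memLp_const (1 : ℝ)).toLp (fun _ : Ω => (1 : ℝ)))
    (φ : ℝ → ℝ) (hφ : ConvexOn ℝ Set.univ φ)
    (X : Lp ℝ p μ) (hφX : MemLp (fun ω => φ (X ω)) p μ) :
    ∀ᵐ ω ∂μ, φ ((T X : Lp ℝ q μ) ω) ≤ (T (hφX.toLp (fun ω => φ (X ω))) : Lp ℝ q μ) ω :=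
  operator_jensen_inequality_general μ p q T hTmono hTunital φ hφ X hφX
end
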